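/- arXiv:2605.09556 — 3 statements merged into one kernel-verified Lean document; each statement's English description precedes it below -/
import Mathlib

section
/- For any n, m ≥ 1, the family of maps h_y : 𝔽₂ⁿ → 𝔽₂ᵐ given by h_y(x) = T_y · x, where T_y is the m × n Toeplitz matrix determined by a uniformly random vector y ∈ 𝔽₂^{n+m-1} (with (T_y)_{i,j} = y_{i-j} for indices i ∈ {0,…,m-1}, j ∈ {0,…,n-1}), is universal₂: for all distinct x, x' ∈ 𝔽₂ⁿ, the probability over uniform y that T_y · x = T_y · x' is at most 2^{-m}. -/
/-- The `m × n` Toeplitz matrix over `𝔽₂` determined by a vector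
`y ∈ 𝔽₂^{n+m-1}`, where `y` is re-indexed so that the matrix entry
`(i, j)` (corresponding to `y_{i-j}` for `i ∈ {0,…,m-1}`, `j ∈ {0,…,n-1}`)
is `y ⟨n - 1 + i - j⟩`. -/
def toeplitz (n m : ℕ) (y : Fin (n + m - 1) → ZMod 2) :
    Matrix (Fin m) (Fin n) (ZMod 2) :=
  Matrix.of fun i j => y ⟨n - 1 + i.val - j.val, by omega⟩

/-!
For fixed `z = x - x' ≠ 0` the map `y ↦ T_y z` is linear in the seed `y`, and a collision is
exactly a seed in its kernel. The map is surjective: if `j₀` is the first index with `z j₀ ≠ 0`,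
the seed coordinate `n - 1 + i - j₀` (`i < m`) enters row `i` with coefficient `z j₀` and
earlier rows only with coefficients `z j = 0`, `j < j₀`, so these `m` columns form an invertible
triangular matrix.
Hence the kernel has exactly `2^{n+m-1} / 2^m` elements.
-/

open Matrix

theorem AddMonoidHom.card_ker_mul_card_of_surjective {G H : Type*} [AddGroup G] [AddGroup H]
    (f : G →+ H) (hf : Function.Surjective f) : Nat.card f.ker * Nat.card H = Nat.card G := by
  rw [← f.ker.card_mul_index, AddSubgroup.index_ker, f.range_eq_top.mpr hf, AddSubgroup.card_top]

theorem LinearMap.surjective_of_lowerTriangular {R V ι : Type*} [CommRing R] [AddCommMonoid V]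
    [Module R V] [Fintype ι] [LinearOrder ι] (L : V →ₗ[R] ι → R) (e : ι → V)
    (hzero : ∀ i i', i < i' → L (e i') i = 0) (hdiag : ∀ i, IsUnit (L (e i) i)) :
    Function.Surjective L := by
  set B : Matrix ι ι R := Matrix.of fun i i' => L (e i') i
  have hB : IsUnit B := by
    rw [Matrix.isUnit_iff_isUnit_det, det_of_isLowerTriangular B fun i i' => hzero i i']
    exact IsUnit.prod_univ_iff.mpr hdiag
  intro v
  obtain ⟨c, hc⟩ := mulVec_surjective_iff_isUnit.mpr hB v
  refine ⟨∑ i', c i' • e i', ?_⟩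
  rw [← hc]
  ext i
  simp [B, mulVec, dotProduct, mul_comm]

def toeplitzSeedMap (n m : ℕ) (z : Fin n → ZMod 2) :
    (Fin (n + m - 1) → ZMod 2) →ₗ[ZMod 2] Fin m → ZMod 2 where
  toFun y := toeplitz n m y *ᵥ z
  map_add' y y' := by ext i; simp [toeplitz, mulVec, dotProduct, add_mul, Finset.sum_add_distrib]
  map_smul' c y := by ext i; simp [toeplitz, mulVec, dotProduct, mul_assoc, Finset.mul_sum]

theorem toeplitzSeedMap_single_apply (n m : ℕ) (z : Fin n → ZMod 2) (k : Fin (n + m - 1))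
    (i : Fin m) :
    toeplitzSeedMap n m z (Pi.single k 1) i =
      ∑ j : Fin n, if n - 1 + i.val - j.val = k.val then z j else 0 := by
  simp [toeplitzSeedMap, toeplitz, mulVec, dotProduct, Pi.single_apply, Fin.ext_iff, eq_comm]

theorem toeplitzSeedMap_surjective (n m : ℕ) {z : Fin n → ZMod 2} (hz : z ≠ 0) :
    Function.Surjective (toeplitzSeedMap n m z) := by
  obtain ⟨j₀, hj₀, hmin⟩ := wellFounded_lt.has_min {j | z j ≠ 0} (Function.ne_iff.mp hz)
  have hlt : ∀ j, j < j₀ → z j = 0 := fun j hj => not_not.mp fun h => hmin j h hj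
  let pivot : Fin m → Fin (n + m - 1) := fun i => ⟨n - 1 + i.val - j₀.val, by omega⟩
  refine (toeplitzSeedMap n m z).surjective_of_lowerTriangular (fun i => Pi.single (pivot i) 1)
    (fun i i' hii' => ?_) (fun i => ?_)
  · rw [toeplitzSeedMap_single_apply]
    refine Finset.sum_eq_zero fun j _ => ?_
    split_ifs with h
    · exact hlt j (Fin.lt_def.mpr (by simp only [pivot] at h; omega))
    · rfl
  · rw [toeplitzSeedMap_single_apply, Finset.sum_eq_single j₀ (fun j _ hj => ?_) (by simp)]
    · simpa [pivot] using Ne.isUnit hj₀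
    · rw [if_neg]
      simp only [pivot]
      omega

theorem toeplitz_universal₂_general (n m : ℕ)
    (x x' : Fin n → ZMod 2) (hxx : x ≠ x') :
    ((Finset.univ.filter fun y : Fin (n + m - 1) → ZMod 2 =>
        (toeplitz n m y).mulVec x = (toeplitz n m y).mulVec x').card : ℝ)
      / 2 ^ (n + m - 1) ≤ (1 / 2 : ℝ) ^ m := by
  set K := (toeplitzSeedMap n m (x - x')).toAddMonoidHom.ker
  have hcollision : (Finset.univ.filter fun y : Fin (n + m - 1) → ZMod 2 =>
      (toeplitz n m y).mulVec x = (toeplitz n m y).mulVec x').card = Nat.card K := by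
    rw [Nat.card_eq_fintype_card, Fintype.card_subtype]
    congr! 2 with y
    simp [K, toeplitzSeedMap, mulVec_sub, sub_eq_zero]
  have hcard : (Nat.card K : ℝ) * 2 ^ m = 2 ^ (n + m - 1) := by
    have hker := (toeplitzSeedMap n m (x - x')).toAddMonoidHom.card_ker_mul_card_of_surjective
      (toeplitzSeedMap_surjective n m (sub_ne_zero.mpr hxx))
    rw [Nat.card_fun, Nat.card_fun, Nat.card_zmod, Nat.card_fin, Nat.card_fin] at hker
    exact_mod_cast hker
  have hK : (Nat.card K : ℝ) ≠ 0 := Nat.cast_ne_zero.mpr Nat.card_pos.ne'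
  rw [hcollision, ← hcard, div_mul_cancel_left₀ hK, one_div, inv_pow]

/-- The family of Toeplitz hash functions `h_y(x) = T_y · x` indexed by a
uniformly random seed `y ∈ 𝔽₂^{n+m-1}` is universal₂: for distinct inputs
`x ≠ x'`, the probability of a collision is at most `2^{-m}`. -/
theorem toeplitz_universal₂ (n m : ℕ) (hn : 1 ≤ n) (hm : 1 ≤ m)
    (x x' : Fin n → ZMod 2) (hxx : x ≠ x') :
    ((Finset.univ.filter fun y : Fin (n + m - 1) → ZMod 2 =>
        (toeplitz n m y).mulVec x = (toeplitz n m y).mulVec x').card : ℝ)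
      / 2 ^ (n + m - 1) ≤ (1 / 2 : ℝ) ^ m :=
  toeplitz_universal₂_general n m x x' hxx
end

section
/- The modified Toeplitz family f_y(x) = (M_y, I_m)·x, with M_y the m × (n−m) Toeplitz matrix built from uniform y ∈ 𝔽₂^{n-1}, is 2-almost dual universal₂: for every nonzero x ∈ 𝔽₂ⁿ, the probability over uniform y that x ∈ (ker f_y)^⊥ is at most 2 · 2^{-(n-m)}. -/
/-!
For fixed `x`, membership `x ∈ (ker f_y)^⊥` forces `x̲ = M_yᵀ x̄`, a system of `n - m` linear
equations in the seed `y`. If `x̄ = 0` it forces `x = 0`. Otherwise let `k` be the top nonzero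
position of `x̄`: equation `j` expresses the seed bit `y_{n-m-1-j+k}` through bits of smaller
index, so the `n - m` bits in the window `[k, n - m + k)` are determined by the remaining
`m - 1` bits, and at most `2^m` of the `2^{n-1}` seeds qualify.
-/

open Matrix

/-- The `m × (n-m)` Toeplitz matrix `M_y` over `𝔽₂` determined by
`y ∈ 𝔽₂^{n-1}`. -/
def modToeplitz (n m : ℕ) (y : Fin (n - 1) → ZMod 2) :
    Matrix (Fin m) (Fin (n - m)) (ZMod 2) :=
  Matrix.of fun i j => y ⟨n - m - 1 + i.val - j.val, by omega⟩

/-- First `n - m` bits of `x ∈ 𝔽₂ⁿ`. -/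
def lowPart (n m : ℕ) (x : Fin n → ZMod 2) : Fin (n - m) → ZMod 2 :=
  fun j => x ⟨j.val, by omega⟩

/-- Last `m` bits of `x ∈ 𝔽₂ⁿ` (for `m ≤ n`). -/
def highPart (n m : ℕ) (hm : m ≤ n) (x : Fin n → ZMod 2) : Fin m → ZMod 2 :=
  fun i => x ⟨n - m + i.val, by omega⟩

/-- The modified Toeplitz map `f_y(x) = (M_y, I_m) · x = M_y·x̲ ⊕ x̄`. -/
def modToeplitzMap (n m : ℕ) (hm : m ≤ n) (y : Fin (n - 1) → ZMod 2)
    (x : Fin n → ZMod 2) : Fin m → ZMod 2 :=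
  (modToeplitz n m y).mulVec (lowPart n m x) + highPart n m hm x

/-- `(u ‖ w)` in the paper's notation. -/
def concatParts (n m : ℕ) (hm : m ≤ n) (u : Fin (n - m) → ZMod 2) (w : Fin m → ZMod 2) :
    Fin n → ZMod 2 :=
  Fin.append u w ∘ Fin.cast (Nat.sub_add_cancel hm).symm

section Parts

variable {n m : ℕ} (hm : m ≤ n)

lemma lowPart_concatParts (u : Fin (n - m) → ZMod 2) (w : Fin m → ZMod 2) :
    lowPart n m (concatParts n m hm u w) = u := by
  funext j
  exact Fin.append_left u w j

lemma highPart_concatParts (u : Fin (n - m) → ZMod 2) (w : Fin m → ZMod 2) :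
    highPart n m hm (concatParts n m hm u w) = w := by
  funext i
  exact Fin.append_right u w i

lemma dotProduct_eq_lowPart_add_highPart (x v : Fin n → ZMod 2) :
    x ⬝ᵥ v = lowPart n m x ⬝ᵥ lowPart n m v + highPart n m hm x ⬝ᵥ highPart n m hm v := by
  rw [dotProduct, ← Fin.sum_congr' _ (Nat.sub_add_cancel hm), Fin.sum_univ_add]
  rfl

lemma eq_zero_of_lowPart_eq_zero_of_highPart_eq_zero {x : Fin n → ZMod 2}
    (hlow : lowPart n m x = 0) (hhigh : highPart n m hm x = 0) : x = 0 := by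
  funext t
  by_cases ht : t.val < n - m
  · exact congrFun hlow ⟨t, ht⟩
  · simpa [highPart, Nat.add_sub_cancel' (not_lt.mp ht)] using
      congrFun hhigh ⟨t - (n - m), by omega⟩

end Parts

/-- `(u ‖ -M_y u) ∈ ker f_y` for every `u`. -/
lemma lowPart_eq_vecMul_of_orthogonal_ker {n m : ℕ} (hm : m ≤ n) {x : Fin n → ZMod 2}
    {y : Fin (n - 1) → ZMod 2} (hy : ∀ v, modToeplitzMap n m hm y v = 0 → x ⬝ᵥ v = 0) :
    lowPart n m x = highPart n m hm x ᵥ* modToeplitz n m y := by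
  rw [← sub_eq_zero, ← dotProduct_eq_zero_iff]
  intro u
  have hker : modToeplitzMap n m hm y (concatParts n m hm u (-(modToeplitz n m y *ᵥ u))) = 0 := by
    simp [modToeplitzMap, lowPart_concatParts, highPart_concatParts]
  have := hy _ hker
  rwa [dotProduct_eq_lowPart_add_highPart hm, lowPart_concatParts, highPart_concatParts,
    dotProduct_neg, dotProduct_mulVec, ← sub_eq_add_neg, ← sub_dotProduct] at this

def zeroExtend {R : Type*} [Zero R] {L : ℕ} (y : Fin L → R) (t : ℕ) : R :=
  if h : t < L then y ⟨t, h⟩ else 0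

lemma vecMul_modToeplitz_apply {n m : ℕ} (h : Fin m → ZMod 2) (y : Fin (n - 1) → ZMod 2)
    (j : Fin (n - m)) :
    (h ᵥ* modToeplitz n m y) j = ∑ i, h i * zeroExtend y (n - m - 1 - j + i) := by
  refine (Finset.sum_congr rfl fun i _ => ?_ : ∑ i, h i * modToeplitz n m y i j = _)
  simp only [modToeplitz, of_apply, zeroExtend, dif_pos (show n - m - 1 - j + i < n - 1 by omega)]
  congr 3
  omega

/-- Equation `s` determines `d (s + k)` from earlier terms, since `h k` cancels. -/
theorem shift_eq_of_sum_mul_eq {R : Type*} [Ring R] [NoZeroDivisors R] {m N : ℕ}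
    {h : Fin m → R} {k : Fin m} (hk : h k ≠ 0) (hmax : ∀ i, h i ≠ 0 → i ≤ k) {d d' : ℕ → R}
    (hinit : ∀ t < k.val, d t = d' t)
    (hsum : ∀ s < N, ∑ i, h i * d (s + i) = ∑ i, h i * d' (s + i)) :
    ∀ s < N, d (s + k) = d' (s + k) := by
  intro s
  induction s using Nat.strong_induction_on with
  | _ s ih =>
    intro hs
    have hlower : ∀ i ∈ Finset.univ.erase k, h i * d (s + i) = h i * d' (s + i) := by
      intro i hi
      by_cases hi0 : h i = 0
      · simp [hi0]
      have hik : i.val < k :=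
        Fin.lt_def.mp (lt_of_le_of_ne (hmax i hi0) (Finset.ne_of_mem_erase hi))
      congr 1
      by_cases hsi : s + i < k
      · exact hinit _ hsi
      · simpa [Nat.sub_add_cancel (not_lt.mp hsi)] using ih (s + i - k) (by omega) (by omega)
    have := hsum s hs
    rwa [← Finset.add_sum_erase _ _ (Finset.mem_univ k),
      ← Finset.add_sum_erase _ _ (Finset.mem_univ k), Finset.sum_congr rfl hlower,
      add_left_inj, mul_right_inj' hk] at this

/-- The `m - 1` seed bits outside the window `[k, n - m + k)`, padded by one slot. -/
def outsideWindow (n m k : ℕ) (y : Fin (n - 1) → ZMod 2) : Fin m → ZMod 2 :=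
  fun i => if i.val < k then zeroExtend y i else zeroExtend y (n - m + i)

lemma eq_of_vecMul_modToeplitz_eq {n m : ℕ} {h : Fin m → ZMod 2} {k : Fin m} (hk : h k ≠ 0)
    (hmax : ∀ i, h i ≠ 0 → i ≤ k) {y y' : Fin (n - 1) → ZMod 2}
    (hvec : h ᵥ* modToeplitz n m y = h ᵥ* modToeplitz n m y')
    (hout : outsideWindow n m k y = outsideWindow n m k y') : y = y' := by
  have hsum : ∀ s < n - m,
      ∑ i, h i * zeroExtend y (s + i) = ∑ i, h i * zeroExtend y' (s + i) := by
    intro s hs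
    have := congrFun hvec ⟨n - m - 1 - s, by omega⟩
    rwa [vecMul_modToeplitz_apply, vecMul_modToeplitz_apply,
      show n - m - 1 - (n - m - 1 - s) = s by omega] at this
  have hinit : ∀ t < k.val, zeroExtend y t = zeroExtend y' t := fun t ht => by
    simpa [outsideWindow, ht] using congrFun hout ⟨t, by omega⟩
  have hwindow := shift_eq_of_sum_mul_eq hk hmax hinit hsum
  have hall : ∀ t, zeroExtend y t = zeroExtend y' t := by
    intro t
    by_cases hbelow : t < k
    · exact hinit t hbelow
    by_cases hinside : t < n - m + k
    · simpa [Nat.sub_add_cancel (not_lt.mp hbelow)] using hwindow (t - k) (by omega)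
    by_cases hseed : t < n - 1
    · have := congrFun hout ⟨t - (n - m), by omega⟩
      simpa [outsideWindow, show ¬ t - (n - m) < k by omega,
        show n - m + (t - (n - m)) = t by omega] using this
    · simp [zeroExtend, hseed]
  funext t
  simpa [zeroExtend] using hall t

open Classical in
lemma card_orthogonal_seeds_le (n m : ℕ) (hm : m ≤ n) {x : Fin n → ZMod 2} (hx : x ≠ 0) :
    (Finset.univ.filter fun y : Fin (n - 1) → ZMod 2 =>
        ∀ v, modToeplitzMap n m hm y v = 0 → x ⬝ᵥ v = 0).card ≤ 2 ^ m := by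
  by_cases hhigh : highPart n m hm x = 0
  · suffices hempty : Finset.univ.filter (fun y : Fin (n - 1) → ZMod 2 =>
        ∀ v, modToeplitzMap n m hm y v = 0 → x ⬝ᵥ v = 0) = ∅ by simp [hempty]
    refine Finset.filter_eq_empty_iff.mpr fun y _ hy => hx ?_
    refine eq_zero_of_lowPart_eq_zero_of_highPart_eq_zero hm ?_ hhigh
    rw [lowPart_eq_vecMul_of_orthogonal_ker hm hy, hhigh, zero_vecMul]
  obtain ⟨k, hk, hmax⟩ : ∃ k, highPart n m hm x k ≠ 0 ∧ ∀ i, highPart n m hm x i ≠ 0 → i ≤ k := by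
    obtain ⟨k, hkT, hkmax⟩ :=
      (Finset.univ.filter fun i => highPart n m hm x i ≠ 0).exists_max_image id
        (by simpa [Finset.filter_nonempty_iff, funext_iff] using hhigh)
    exact ⟨k, (Finset.mem_filter.mp hkT).2, fun i hi => hkmax i (by simpa using hi)⟩
  calc _ ≤ (Finset.univ : Finset (Fin m → ZMod 2)).card := by
        refine Finset.card_le_card_of_injOn (outsideWindow n m k) (by simp) ?_
        intro y hy y' hy' hout
        refine eq_of_vecMul_modToeplitz_eq hk hmax ?_ hout
        rw [← lowPart_eq_vecMul_of_orthogonal_ker hm (Finset.mem_filter.mp hy).2,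
          ← lowPart_eq_vecMul_of_orthogonal_ker hm (Finset.mem_filter.mp hy').2]
    _ = 2 ^ m := by simp

lemma div_two_pow_le_of_le {c n m : ℕ} (hc : c ≤ 2 ^ m) (hn : 1 ≤ n) (hm : m ≤ n) :
    (c : ℝ) / 2 ^ (n - 1) ≤ 2 * (1 / 2 : ℝ) ^ (n - m) := by
  have hpow : (2 : ℝ) ^ (n - m) * 2 ^ m = 2 * 2 ^ (n - 1) := by
    rw [← pow_add, ← pow_succ']
    congr 1
    omega
  rw [div_le_iff₀ (by positivity)]
  calc (c : ℝ) ≤ 2 ^ m := by exact_mod_cast hc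
    _ = 2 * (1 / 2 : ℝ) ^ (n - m) * 2 ^ (n - 1) := by
      rw [mul_right_comm, ← hpow, mul_right_comm, ← mul_pow]
      norm_num

open Classical in
/-- The modified Toeplitz family `f_y(x) = (M_y, I_m)·x` with a uniform seed
`y ∈ 𝔽₂^{n-1}` is `2`-almost dual universal₂: for every nonzero `x ∈ 𝔽₂ⁿ`, the
probability over `y` that `x ∈ (ker f_y)^⊥` is at most `2 · 2^{-(n-m)}`. -/
theorem modToeplitz_almost_dual_universal₂ (n m : ℕ) (hm : m ≤ n)
    (x : Fin n → ZMod 2) (hx : x ≠ 0) :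
    ((Finset.univ.filter fun y : Fin (n - 1) → ZMod 2 =>
        ∀ v, modToeplitzMap n m hm y v = 0 → x ⬝ᵥ v = 0).card : ℝ)
      / 2 ^ (n - 1) ≤ 2 * (1 / 2 : ℝ) ^ (n - m) := by
  have hn : 1 ≤ n := Nat.pos_of_ne_zero fun h => hx (by subst h; exact Subsingleton.elim _ _)
  exact div_two_pow_le_of_le (card_orthogonal_seeds_le n m hm hx) hn hm
end

section
/- Counting bound for Toeplitz kernels containing a fixed vector: fix m ≤ n and a nonzero x ∈ 𝔽₂ⁿ. Among all 2^{n+m-1} Toeplitz matrices T_y of size m × n over 𝔽₂, exactly 2^{n-1} satisfy x ∈ ker(T_y); hence Pr_y[x ∈ ker T_y] = 2^{-m} exactly (not merely at most 2^{-m}). -/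
/-!
The map `y ↦ T_y x` is `𝔽₂`-linear; it is surjective because, if `j₀` is the first nonzero
coordinate of `x`, placing a vector `v ∈ 𝔽₂ᵐ` at the seed positions `n - 1 - j₀ + i` yields
`(T_y x)_i = v_i + (terms in the v_k with k < i)`, a unitriangular, hence injective, map of
`𝔽₂ᵐ` to itself. By rank–nullity the kernel has dimension `(n + m - 1) - m = n - 1`.
-/

open Function Module Matrix

theorem LinearMap.injective_of_lower_unitriangular {R M ι : Type*} [Ring R] [AddCommGroup M]
    [Module R M] [LinearOrder ι] [WellFoundedLT ι] (f : (ι → M) →ₗ[R] ι → M)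
    (hf : ∀ v i, (∀ k < i, v k = 0) → f v i = v i) : Injective f := by
  refine (injective_iff_map_eq_zero f).2 fun v hv => funext fun i => ?_
  induction i using WellFoundedLT.induction with
  | _ i ih => exact (hf v i ih).symm.trans (congrFun hv i)

section

variable {n m : ℕ}

theorem toeplitz_add (y z : Fin (n + m - 1) → ZMod 2) :
    toeplitz n m (y + z) = toeplitz n m y + toeplitz n m z := rfl

theorem toeplitz_smul (c : ZMod 2) (y : Fin (n + m - 1) → ZMod 2) :
    toeplitz n m (c • y) = c • toeplitz n m y := rfl

def toeplitzMulVec (n m : ℕ) (x : Fin n → ZMod 2) :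
    (Fin (n + m - 1) → ZMod 2) →ₗ[ZMod 2] Fin m → ZMod 2 where
  toFun y := toeplitz n m y *ᵥ x
  map_add' y z := by rw [toeplitz_add, Matrix.add_mulVec]
  map_smul' c y := by rw [toeplitz_smul, Matrix.smul_mulVec, RingHom.id_apply]

def seedWindow (n m : ℕ) (j₀ : Fin n) : Fin m → Fin (n + m - 1) :=
  fun i => ⟨n - 1 - j₀ + i, by omega⟩

theorem seedWindow_injective (j₀ : Fin n) : Injective (seedWindow n m j₀) :=
  fun a b h => Fin.ext (by simpa [seedWindow] using h)

theorem toeplitzMulVec_extend_seedWindow {x : Fin n → ZMod 2} {j₀ : Fin n} (hx₀ : x j₀ = 1)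
    (hx : ∀ j < j₀, x j = 0) {v : Fin m → ZMod 2} {i : Fin m} (hv : ∀ k < i, v k = 0) :
    toeplitzMulVec n m x (extend (seedWindow n m j₀) v 0) i = v i := by
  have hwin : ∀ t : Fin (n + m - 1), (∀ k, seedWindow n m j₀ k = t → v k = 0) →
      extend (seedWindow n m j₀) v 0 t = 0 := by
    intro t ht
    by_cases h : ∃ k, seedWindow n m j₀ k = t
    · obtain ⟨k, rfl⟩ := h
      rw [(seedWindow_injective j₀).extend_apply]
      exact ht k rfl
    · exact extend_apply' _ _ _ h
  show ∑ j : Fin n, extend (seedWindow n m j₀) v 0 ⟨n - 1 + i.val - j.val, by omega⟩ * x j = v i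
  rw [Finset.sum_eq_single j₀]
  · have : (⟨n - 1 + i - j₀, by omega⟩ : Fin (n + m - 1)) = seedWindow n m j₀ i := by
      ext; simp only [seedWindow]; omega
    rw [hx₀, mul_one, this, (seedWindow_injective j₀).extend_apply]
  · intro j _ hj
    rcases hj.lt_or_gt with hlt | hgt
    · rw [hx j hlt, mul_zero]
    · rw [hwin, zero_mul]
      rintro k hk
      apply hv
      simp only [seedWindow, Fin.ext_iff] at hk
      rw [Fin.lt_def] at hgt ⊢
      omega
  · exact fun h => absurd (Finset.mem_univ j₀) h

theorem toeplitzMulVec_surjective {x : Fin n → ZMod 2} (hx : x ≠ 0) :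
    Surjective (toeplitzMulVec n m x) := by
  obtain ⟨j₀, hxj₀, hmin⟩ := WellFounded.has_min wellFounded_lt {j | x j ≠ 0}
    (Function.ne_iff.1 hx)
  have hx₀ : x j₀ = 1 := Fin.eq_one_of_ne_zero _ hxj₀
  have hx_lt : ∀ j < j₀, x j = 0 := fun j hj => not_not.1 fun h => hmin j h hj
  let R := ExtendByZero.linearMap (ZMod 2) (seedWindow n m j₀)
  have hinj : Injective (toeplitzMulVec n m x ∘ₗ R) :=
    LinearMap.injective_of_lower_unitriangular _ fun _ _ hv =>
      toeplitzMulVec_extend_seedWindow hx₀ hx_lt hv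
  exact Surjective.of_comp (g := R) (LinearMap.injective_iff_surjective.1 hinj)

theorem finrank_ker_toeplitzMulVec {x : Fin n → ZMod 2} (hx : x ≠ 0) :
    finrank (ZMod 2) (LinearMap.ker (toeplitzMulVec n m x)) = n - 1 := by
  have hn : n ≠ 0 := by rintro rfl; exact hx (Subsingleton.elim _ _)
  have := LinearMap.finrank_range_add_finrank_ker (toeplitzMulVec n m x)
  rw [LinearMap.range_eq_top.2 (toeplitzMulVec_surjective hx), finrank_top,
    finrank_fin_fun, finrank_fin_fun] at this
  omega

theorem natCard_ker_toeplitzMulVec {x : Fin n → ZMod 2} (hx : x ≠ 0) :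
    Nat.card (LinearMap.ker (toeplitzMulVec n m x)) = 2 ^ (n - 1) := by
  rw [natCard_eq_pow_finrank (K := ZMod 2), Nat.card_zmod, finrank_ker_toeplitzMulVec hx]

end

theorem toeplitz_kernel_count_general (n m : ℕ)
    (x : Fin n → ZMod 2) (hx : x ≠ 0) :
    (Finset.univ.filter fun y : Fin (n + m - 1) → ZMod 2 =>
        (toeplitz n m y).mulVec x = 0).card = 2 ^ (n - 1) ∧
    ((Finset.univ.filter fun y : Fin (n + m - 1) → ZMod 2 =>
        (toeplitz n m y).mulVec x = 0).card : ℝ) / 2 ^ (n + m - 1)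
      = (1 / 2 : ℝ) ^ m := by
  have hcount : (Finset.univ.filter fun y : Fin (n + m - 1) → ZMod 2 =>
      (toeplitz n m y).mulVec x = 0).card = 2 ^ (n - 1) := by
    rw [← Fintype.card_subtype, ← Nat.card_eq_fintype_card,
      ← natCard_ker_toeplitzMulVec (m := m) hx]
    rfl
  have hn : n ≠ 0 := by rintro rfl; exact hx (Subsingleton.elim _ _)
  refine ⟨hcount, ?_⟩
  rw [hcount, show n + m - 1 = n - 1 + m by omega]
  push_cast
  rw [pow_add, div_mul_cancel_left₀ (by positivity), one_div, inv_pow]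

/-- Fix `m ≤ n` and a nonzero `x ∈ 𝔽₂ⁿ`. Among all `2^{n+m-1}` Toeplitz matrices
`T_y` of size `m × n` over `𝔽₂`, exactly `2^{n-1}` satisfy `x ∈ ker T_y`; hence
the probability over a uniform seed `y` that `T_y · x = 0` is exactly `2^{-m}`. -/
theorem toeplitz_kernel_count (n m : ℕ) (hm : m ≤ n)
    (x : Fin n → ZMod 2) (hx : x ≠ 0) :
    (Finset.univ.filter fun y : Fin (n + m - 1) → ZMod 2 =>
        (toeplitz n m y).mulVec x = 0).card = 2 ^ (n - 1) ∧
    ((Finset.univ.filter fun y : Fin (n + m - 1) → ZMod 2 =>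
        (toeplitz n m y).mulVec x = 0).card : ℝ) / 2 ^ (n + m - 1)
      = (1 / 2 : ℝ) ^ m :=
  toeplitz_kernel_count_general n m x hx
end
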